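/- Let F be a field, let A_1, …, A_l be superregular n×n matrices over F, and let B be an invertible n×n matrix over F. Then the iterated Kronecker product M = A_1 ⊗ (A_2 ⊗ (⋯ ⊗ (A_l ⊗ B))) is an n^l-block superregular matrix of size n^{l+1} × n^{l+1} over F; that is, viewing M as an n × n array of n^l × n^l blocks, every square submatrix of M consisting of full blocks is non-singular. -/

import Mathlib

/-- A matrix over a field is superregular if every square submatrix is non-singular. -/
def IsSuperregular {F : Type*} [Field F] {I J : Type*} (A : Matrix I J F) : Prop :=
  ∀ (k : ℕ), 1 ≤ k → ∀ (r : Fin k → I) (c : Fin k → J),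
    Function.Injective r → Function.Injective c →
    (Matrix.of fun i j => A (r i) (c j)).det ≠ 0

/-- A matrix made of an `m × t` array of blocks (the block index ranging over a finite type `β`)
is block superregular if every square submatrix consisting of full blocks is non-singular. -/
def IsBlockSuperregular {F : Type*} [Field F] {m t : ℕ} {β : Type*} [Fintype β]
    [DecidableEq β] (A : Matrix (Fin m × β) (Fin t × β) F) : Prop :=
  ∀ (k : ℕ), 1 ≤ k → ∀ (r : Fin k → Fin m) (c : Fin k → Fin t),
    Function.Injective r → Function.Injective c →
    (Matrix.of fun (i j : Fin k × β) => A (r i.1, i.2) (c j.1, j.2)).det ≠ 0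

/-- The index type of the iterated Kronecker product
`A 0 ⊗ (A 1 ⊗ (⋯ ⊗ (A (l-1) ⊗ B)))`, where `A i` has size `d i × d i` and `B` has
size `nb × nb`. -/
def KronIndex : (l : ℕ) → (Fin l → ℕ) → ℕ → Type
  | 0, _, nb => Fin nb
  | l + 1, d, nb => Fin (d 0) × KronIndex l (fun i => d i.succ) nb

instance instFintypeKronIndex : ∀ (l : ℕ) (d : Fin l → ℕ) (nb : ℕ),
    Fintype (KronIndex l d nb)
  | 0, _, nb => inferInstanceAs (Fintype (Fin nb))
  | l + 1, d, nb =>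
    letI := instFintypeKronIndex l (fun i => d i.succ) nb
    inferInstanceAs (Fintype (Fin (d 0) × KronIndex l (fun i => d i.succ) nb))

instance instDecidableEqKronIndex : ∀ (l : ℕ) (d : Fin l → ℕ) (nb : ℕ),
    DecidableEq (KronIndex l d nb)
  | 0, _, nb => inferInstanceAs (DecidableEq (Fin nb))
  | l + 1, d, nb =>
    letI := instDecidableEqKronIndex l (fun i => d i.succ) nb
    inferInstanceAs (DecidableEq (Fin (d 0) × KronIndex l (fun i => d i.succ) nb))

/-- The iterated Kronecker product `A 0 ⊗ (A 1 ⊗ (⋯ ⊗ (A (l-1) ⊗ B)))`. -/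
def iterKron {F : Type*} [Field F] {nb : ℕ} (B : Matrix (Fin nb) (Fin nb) F) :
    (l : ℕ) → (d : Fin l → ℕ) → (∀ i, Matrix (Fin (d i)) (Fin (d i)) F) →
      Matrix (KronIndex l d nb) (KronIndex l d nb) F
  | 0, _, _ => B
  | l + 1, d, A =>
    Matrix.kroneckerMap (· * ·) (A 0)
      (iterKron B l (fun i => d i.succ) (fun i => A i.succ))

/-!
Write the product as `A 0 ⊗ C`, where `C` is the Kronecker product of the remaining factors.
The full-block submatrix on block rows `r` and block columns `c` is `A 0[r, c] ⊗ C`, whose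
determinant is `det (A 0[r, c]) ^ |C| * det C ^ k`. The first factor is nonzero by
superregularity of `A 0`, and `det C` is, by `det (X ⊗ Y) = det X ^ _ * det Y ^ _` again, a product
of powers of the nonzero determinants of `A 1, …, A l` and `B`.
-/

theorem IsSuperregular.det_ne_zero {F : Type*} [Field F] {ι : Type*} [Fintype ι] [DecidableEq ι]
    {A : Matrix ι ι F} (hA : IsSuperregular A) : A.det ≠ 0 := by
  cases isEmpty_or_nonempty ι
  · simp
  · let e := Fintype.equivFin ι
    have h := hA _ Fintype.card_pos e.symm e.symm e.symm.injective e.symm.injective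
    rwa [← Matrix.det_submatrix_equiv_self e.symm A]

theorem IsSuperregular.isBlockSuperregular_kronecker {F : Type*} [Field F] {m t : ℕ} {β : Type*}
    [Fintype β] [DecidableEq β] {A : Matrix (Fin m) (Fin t) F} {C : Matrix β β F}
    (hA : IsSuperregular A) (hC : C.det ≠ 0) :
    IsBlockSuperregular (Matrix.kroneckerMap (· * ·) A C) := by
  intro k hk r c hr hc
  have hblock : (Matrix.of fun (i j : Fin k × β) =>
      Matrix.kroneckerMap (· * ·) A C (r i.1, i.2) (c j.1, j.2)) =
      Matrix.kroneckerMap (· * ·) (Matrix.of fun i j => A (r i) (c j)) C :=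
    rfl
  rw [hblock, Matrix.det_kronecker]
  exact mul_ne_zero (pow_ne_zero _ (hA k hk r c hr hc)) (pow_ne_zero _ hC)

theorem card_kronIndex (l : ℕ) (d : Fin l → ℕ) (nb : ℕ) :
    Fintype.card (KronIndex l d nb) = (∏ i, d i) * nb := by
  induction l with
  | zero => rw [Fin.prod_univ_zero, one_mul]; exact Fintype.card_fin nb
  | succ l ih =>
    change Fintype.card (Fin (d 0) × KronIndex l (fun i => d i.succ) nb) = _
    rw [Fintype.card_prod, Fintype.card_fin, ih, Fin.prod_univ_succ, mul_assoc]

theorem det_iterKron_ne_zero {F : Type*} [Field F] {nb : ℕ} {B : Matrix (Fin nb) (Fin nb) F}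
    (hB : B.det ≠ 0) {l : ℕ} {d : Fin l → ℕ} {A : ∀ i, Matrix (Fin (d i)) (Fin (d i)) F}
    (hA : ∀ i, (A i).det ≠ 0) : (iterKron B l d A).det ≠ 0 := by
  induction l with
  | zero => exact hB
  | succ l ih =>
    have hkron : (iterKron B (l + 1) d A).det = (A 0).det ^ Fintype.card (KronIndex l _ nb) *
        (iterKron B l _ fun i => A i.succ).det ^ Fintype.card (Fin (d 0)) :=
      Matrix.det_kronecker _ _
    rw [hkron]
    exact mul_ne_zero (pow_ne_zero _ (hA 0)) (pow_ne_zero _ (ih fun i => hA i.succ))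

/-- Corollary: if `A 0, …, A l` are `(l+1)`-many `n × n` superregular matrices and `B` is an
invertible `n × n` matrix, then the iterated Kronecker product
`M = A 0 ⊗ (A 1 ⊗ (⋯ ⊗ (A l ⊗ B)))` is an `n^(l+1)`-block superregular matrix of size
`n^(l+2) × n^(l+2)`. -/
theorem iterKron_const_isBlockSuperregular {F : Type*} [Field F] {l n : ℕ}
    (A : Fin (l + 1) → Matrix (Fin n) (Fin n) F) (B : Matrix (Fin n) (Fin n) F)
    (hA : ∀ i, IsSuperregular (A i)) (hB : IsUnit B) :
    Fintype.card (KronIndex (l + 1) (fun _ => n) n) = n ^ (l + 2) ∧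
    Fintype.card (KronIndex l (fun _ => n) n) = n ^ (l + 1) ∧
    IsBlockSuperregular (iterKron B (l + 1) (fun _ => n) A) := by
  have hBdet : B.det ≠ 0 := (Matrix.isUnit_iff_isUnit_det B).mp hB |>.ne_zero
  refine ⟨by simp [card_kronIndex, pow_succ], by simp [card_kronIndex, pow_succ], ?_⟩
  exact (hA 0).isBlockSuperregular_kronecker
    (det_iterKron_ne_zero hBdet fun i => (hA i.succ).det_ne_zero)
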